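/- arXiv:0912.1194 — 3 statements merged into one kernel-verified Lean document; each statement's English description precedes it below -/
import Mathlib

section
/- Under conditions (C1) and (C2), the growth-rate functional γ is upper semicontinuous on the space of probability measures on T endowed with the topology of weak convergence: if p_n converges weakly to p, then limsup_n γ(p_n) ≤ γ(p). -/
open MeasureTheory
open scoped ENNReal NNReal

/-- The mean offspring number `m_{p,e} = ∫_T m_{t,e} p(dt)` of a strategy `p`. -/
noncomputable def mbar {T E : Type*} [MeasurableSpace T] (m : T → E → ℝ)
    (p : Measure T) (e : E) : ℝ :=
  ∫ t, m t e ∂p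

/-- The growth rate `γ(p) = ∫_E log(m_{p,e}) ν(de)`, an extended real number in `[-∞, ∞)`. -/
noncomputable def growth {T E : Type*} [MeasurableSpace T] [MeasurableSpace E]
    (m : T → E → ℝ) (ν : Measure E) (p : Measure T) : EReal :=
  ((∫⁻ e, ENNReal.ofReal (Real.log (mbar m p e)) ∂ν : ℝ≥0∞) : EReal) -
    ((∫⁻ e, ENNReal.ofReal (-Real.log (mbar m p e)) ∂ν : ℝ≥0∞) : EReal)

/-!
Weak convergence `p_n → p` gives `m_{p_n,e} → m_{p,e}` for every `e`, because `t ↦ m_{t,e}` is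
bounded and continuous. The positive part of `log` is continuous and bounded by `log⁺ M` on
`[0, M]`, so reverse Fatou bounds the limsup of its integrals; the negative part is lower
semicontinuous, so Fatou bounds the liminf of its integrals from below. Subtracting gives the
claim, the positive parts being finite.
-/

open Filter Topology

lemma ENNReal.ofReal_log_eq_ofReal_posLog (x : ℝ) :
    ENNReal.ofReal (Real.log x) = ENNReal.ofReal (Real.posLog x) := by
  rw [Real.posLog, ENNReal.ofReal_max, ENNReal.ofReal_zero, zero_max]

lemma ENNReal.continuous_ofReal_log : Continuous fun x : ℝ => ENNReal.ofReal (Real.log x) :=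
  (ENNReal.continuous_ofReal.comp Real.continuous_posLog).congr fun x =>
    (ENNReal.ofReal_log_eq_ofReal_posLog x).symm

lemma ENNReal.ofReal_log_le_ofReal_posLog {x C : ℝ} (h : |x| ≤ C) :
    ENNReal.ofReal (Real.log x) ≤ ENNReal.ofReal (Real.posLog C) := by
  rw [ENNReal.ofReal_log_eq_ofReal_posLog, ← Real.posLog_abs]
  exact ENNReal.ofReal_le_ofReal (Real.posLog_le_posLog (abs_nonneg x) h)

/-- Since `Real.log 0 = 0`, this function jumps down to `0` at `x = 0`, which keeps it lower
semicontinuous there. -/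
lemma ENNReal.lowerSemicontinuous_ofReal_neg_log :
    LowerSemicontinuous fun x : ℝ => ENNReal.ofReal (-Real.log x) := by
  intro x
  rcases eq_or_ne x 0 with rfl | hx
  · exact lowerSemicontinuousAt_iff_le_liminf.2 (by simp)
  · exact (ENNReal.continuous_ofReal.continuousAt.comp
      (Real.continuousAt_log hx).neg).lowerSemicontinuousAt

lemma EReal.limsup_coe_sub_coe_le {ι : Type*} {l : Filter ι} [l.NeBot] {u v : ι → ℝ≥0∞}
    {a b : ℝ≥0∞} (hu : limsup u l ≤ a) (ha : a ≠ ∞) (hv : b ≤ liminf v l) :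
    limsup (fun i => (u i : EReal) - v i) l ≤ a - b := by
  have hmono : Monotone ((↑) : ℝ≥0∞ → EReal) := EReal.coe_ennreal_strictMono.monotone
  have hu' : limsup (fun i => (u i : EReal)) l = limsup u l :=
    (hmono.map_limsup_of_continuousAt u continuous_coe_ennreal_ereal.continuousAt).symm
  have hv' : liminf (fun i => (v i : EReal)) l = liminf v l :=
    (hmono.map_liminf_of_continuousAt v continuous_coe_ennreal_ereal.continuousAt).symm
  have hu_ne_top : limsup (fun i => (u i : EReal)) l ≠ ⊤ := by
    rw [hu', Ne, EReal.coe_ennreal_eq_top_iff]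
    exact ne_top_of_le_ne_top ha hu
  calc limsup (fun i => (u i : EReal) - v i) l
      = limsup ((fun i => (u i : EReal)) + -fun i => (v i : EReal)) l := by
        simp only [sub_eq_add_neg]; rfl
    _ ≤ limsup (fun i => (u i : EReal)) l + limsup (-fun i => (v i : EReal)) l :=
        EReal.limsup_add_le (Or.inl (hu' ▸ EReal.coe_ennreal_ne_bot _)) (Or.inl hu_ne_top)
    _ = limsup u l - liminf v l := by rw [EReal.limsup_neg, hu', hv', sub_eq_add_neg]
    _ ≤ a - b := EReal.sub_le_sub (EReal.coe_ennreal_le_coe_ennreal_iff.2 hu)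
        (EReal.coe_ennreal_le_coe_ennreal_iff.2 hv)

/-- `growth m ν p` is `logIntegral ν (mbar m p)` definitionally. -/
noncomputable def logIntegral {E : Type*} [MeasurableSpace E] (ν : Measure E) (f : E → ℝ) :
    EReal :=
  ((∫⁻ e, ENNReal.ofReal (Real.log (f e)) ∂ν : ℝ≥0∞) : EReal) -
    ((∫⁻ e, ENNReal.ofReal (-Real.log (f e)) ∂ν : ℝ≥0∞) : EReal)

theorem limsup_logIntegral_le {E : Type*} [MeasurableSpace E] {ν : Measure E}
    [IsFiniteMeasure ν] {f : ℕ → E → ℝ} {g : E → ℝ} {C : ℝ} (hf : ∀ n, Measurable (f n))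
    (hfC : ∀ n e, |f n e| ≤ C) (hfg : ∀ e, Tendsto (fun n => f n e) atTop (𝓝 (g e))) :
    limsup (fun n => logIntegral ν (f n)) atTop ≤ logIntegral ν g := by
  have hgC : ∀ e, |g e| ≤ C := fun e =>
    le_of_tendsto' ((continuous_abs.tendsto _).comp (hfg e)) fun n => hfC n e
  have hC_fin : ∫⁻ _, ENNReal.ofReal (Real.posLog C) ∂ν ≠ ∞ := by
    simp [lintegral_const, ENNReal.mul_eq_top]
  have hg_fin : ∫⁻ e, ENNReal.ofReal (Real.log (g e)) ∂ν ≠ ∞ :=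
    ne_top_of_le_ne_top hC_fin
      (lintegral_mono fun e => ENNReal.ofReal_log_le_ofReal_posLog (hgC e))
  refine EReal.limsup_coe_sub_coe_le ?_ hg_fin ?_
  · calc limsup (fun n => ∫⁻ e, ENNReal.ofReal (Real.log (f n e)) ∂ν) atTop
        ≤ ∫⁻ e, limsup (fun n => ENNReal.ofReal (Real.log (f n e))) atTop ∂ν :=
          limsup_lintegral_le _ (fun n => (hf n).log.ennreal_ofReal)
            (fun n => ae_of_all _ fun e => ENNReal.ofReal_log_le_ofReal_posLog (hfC n e))
            hC_fin
      _ = ∫⁻ e, ENNReal.ofReal (Real.log (g e)) ∂ν := lintegral_congr fun e =>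
          ((ENNReal.continuous_ofReal_log.tendsto _).comp (hfg e)).limsup_eq
  · calc ∫⁻ e, ENNReal.ofReal (-Real.log (g e)) ∂ν
        ≤ ∫⁻ e, liminf (fun n => ENNReal.ofReal (-Real.log (f n e))) atTop ∂ν :=
          lintegral_mono fun e =>
            (ENNReal.lowerSemicontinuous_ofReal_neg_log.le_liminf (g e)).trans
              (hfg e).liminf_le_liminf_comp
      _ ≤ liminf (fun n => ∫⁻ e, ENNReal.ofReal (-Real.log (f n e)) ∂ν) atTop :=
          lintegral_liminf_le fun n => (hf n).log.neg.ennreal_ofReal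

section mbar

variable {T E : Type*} [MeasurableSpace T] {m : T → E → ℝ}

theorem measurable_mbar [MeasurableSpace E] (hm : Measurable (Function.uncurry m))
    (μ : Measure T) [SFinite μ] : Measurable (mbar m μ) :=
  hm.stronglyMeasurable.integral_prod_left.measurable

theorem abs_mbar_le {μ : Measure T} [IsProbabilityMeasure μ] {e : E} {C : ℝ}
    (hC : ∀ t, |m t e| ≤ C) : |mbar m μ e| ≤ C := by
  simpa [mbar] using norm_integral_le_of_norm_le_const (μ := μ) (f := (m · e)) (ae_of_all _ hC)

theorem tendsto_mbar [TopologicalSpace T] [OpensMeasurableSpace T] {ι : Type*} {l : Filter ι}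
    {μs : ι → ProbabilityMeasure T} {μ : ProbabilityMeasure T} (hμ : Tendsto μs l (𝓝 μ))
    {e : E} {C : ℝ} (hcont : Continuous fun t => m t e) (hC : ∀ t, |m t e| ≤ C) :
    Tendsto (fun i => mbar m (μs i) e) l (𝓝 (mbar m μ e)) :=
  ProbabilityMeasure.tendsto_iff_forall_integral_tendsto.1 hμ
    (BoundedContinuousFunction.ofNormedAddCommGroup _ hcont C hC)

end mbar

theorem growth_upper_semicontinuous_general
    {T E : Type*} [MetricSpace T] [MeasurableSpace T] [BorelSpace T]
    [MeasurableSpace E]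
    (ν₁ : Measure E) [IsProbabilityMeasure ν₁]
    (m : T → E → ℝ) (hm : Measurable (Function.uncurry m))
    (hnonneg : ∀ t e, 0 ≤ m t e)
    (M : ℝ) (hC1 : ∀ t e, m t e ≤ M)
    (hC2 : ∀ e, Continuous fun t => m t e)
    (pn : ℕ → ProbabilityMeasure T) (p : ProbabilityMeasure T)
    (hconv : Filter.Tendsto pn Filter.atTop (nhds p)) :
    Filter.limsup (fun n => growth m ν₁ (pn n : Measure T)) Filter.atTop ≤
      growth m ν₁ (p : Measure T) := by
  have hbdd : ∀ t e, |m t e| ≤ M := fun t e => (abs_of_nonneg (hnonneg t e)).trans_le (hC1 t e)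
  exact limsup_logIntegral_le (fun n => measurable_mbar hm _) (fun n e => abs_mbar_le (hbdd · e))
    fun e => tendsto_mbar hconv (hC2 e) (hbdd · e)

/-- under (C1) and (C2), the growth-rate functional `γ` is upper semicontinuous
on the space of probability measures on `T` with the topology of weak convergence:
if `p_n → p` weakly, then `limsup_n γ(p_n) ≤ γ(p)`. -/
theorem growth_upper_semicontinuous
    {T E : Type*} [MetricSpace T] [MeasurableSpace T] [BorelSpace T]
    [TopologicalSpace E] [PolishSpace E] [MeasurableSpace E] [BorelSpace E]
    (ν₁ : Measure E) [IsProbabilityMeasure ν₁]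
    (m : T → E → ℝ) (hm : Measurable (Function.uncurry m))
    (hnonneg : ∀ t e, 0 ≤ m t e)
    (M : ℝ) (hM : 0 < M) (hC1 : ∀ t e, m t e ≤ M)
    (hC2 : ∀ e, Continuous fun t => m t e)
    (pn : ℕ → ProbabilityMeasure T) (p : ProbabilityMeasure T)
    (hconv : Filter.Tendsto pn Filter.atTop (nhds p)) :
    Filter.limsup (fun n => growth m ν₁ (pn n : Measure T)) Filter.atTop ≤
      growth m ν₁ (p : Measure T) :=
  growth_upper_semicontinuous_general ν₁ m hm hnonneg M hC1 hC2 pn p hconv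
end

section
/- If ν₂ is a product measure, ν₂ = ν₁ ⊗ ν₁ (i.e. the two consecutive environment states are independent), then the optimal growth rates with and without sensing coincide: γ** = γ*. -/
/-! Under `ν₁ ⊗ ν₁`, Tonelli writes `γ(p̄)` as the `ν₁`-average over the sensed state `e₁` of
`γ(p_{e₁})`, and each of these is at most `γ*`; conversely the constant strategies `p_e = p`
recover every `γ(p)`. Both growth rates are `EReal` differences of `ℝ≥0∞`-valued integrals, so the
averaging step needs no integrability: a pointwise bound `f - g ≤ c` integrates to
`∫ f - ∫ g ≤ c` against any probability measure. -/

open MeasureTheory ProbabilityTheory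
open scoped ENNReal NNReal

/-- The top Lyapounov exponent without sensing,
`γ* = sup{γ(p) : p a probability measure on T}`. -/
noncomputable def gammaStar {T E : Type*} [MeasurableSpace T] [MeasurableSpace E]
    (m : T → E → ℝ) (ν : Measure E) : EReal :=
  ⨆ p : {q : Measure T // IsProbabilityMeasure q}, growth m ν (p : Measure T)

/-- The growth rate `γ(p̄) = ∫_{E×E} log(m_{p̄(e₁),e₂}) ν₂(de₁,de₂)` of a strategy with
sensing `p̄` (a Markov kernel from `E` to `T`), an extended real number in `[-∞, ∞)`. -/
noncomputable def growthSensing {T E : Type*} [MeasurableSpace T] [MeasurableSpace E]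
    (m : T → E → ℝ) (ν₂ : Measure (E × E)) (pbar : Kernel E T) : EReal :=
  ((∫⁻ q, ENNReal.ofReal (Real.log (mbar m (pbar q.1) q.2)) ∂ν₂ : ℝ≥0∞) : EReal) -
    ((∫⁻ q, ENNReal.ofReal (-Real.log (mbar m (pbar q.1) q.2)) ∂ν₂ : ℝ≥0∞) : EReal)

/-- The optimal growth rate with sensing `γ**`. -/
noncomputable def gammaStarStar {T E : Type*} [MeasurableSpace T] [MeasurableSpace E]
    (m : T → E → ℝ) (ν₂ : Measure (E × E)) : EReal :=
  ⨆ pbar : {κ : Kernel E T // IsMarkovKernel κ}, growthSensing m ν₂ (pbar : Kernel E T)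

theorem EReal.coe_ennreal_sub_coe_ennreal_le_coe_iff (x y : ℝ≥0∞) (r : ℝ) :
    (x : EReal) - y ≤ r ↔ x + ENNReal.ofReal (-r) ≤ y + ENNReal.ofReal r := by
  induction y using ENNReal.recTopCoe with
  | top => simp
  | coe y =>
    induction x using ENNReal.recTopCoe with
    | top => simp
    | coe x =>
      rw [EReal.coe_nnreal_eq_coe_real, EReal.coe_nnreal_eq_coe_real, ← EReal.coe_sub,
        EReal.coe_le_coe_iff, ENNReal.ofReal, ENNReal.ofReal, ← ENNReal.coe_add,
        ← ENNReal.coe_add, ENNReal.coe_le_coe, ← NNReal.coe_le_coe]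
      push_cast [Real.coe_toNNReal']
      conv_lhs => rw [← max_zero_sub_max_neg_zero_eq_self r]
      constructor <;> intro h <;> linarith

theorem MeasureTheory.lintegral_sub_lintegral_le {α : Type*} [MeasurableSpace α]
    {μ : Measure α} [IsProbabilityMeasure μ] {f g : α → ℝ≥0∞} {c : EReal}
    (h : ∀ x, (f x : EReal) - g x ≤ c) :
    ((∫⁻ x, f x ∂μ : ℝ≥0∞) : EReal) - ((∫⁻ x, g x ∂μ : ℝ≥0∞) : EReal) ≤ c := by
  induction c using EReal.rec with
  | top => exact le_top
  | bot =>
    have hg : ∀ x, g x = ⊤ := fun x => by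
      simpa [sub_eq_add_neg, EReal.add_eq_bot_iff, EReal.neg_eq_bot_iff] using h x
    simp [hg]
  | coe r =>
    simp only [EReal.coe_ennreal_sub_coe_ennreal_le_coe_iff] at h ⊢
    calc ∫⁻ x, f x ∂μ + ENNReal.ofReal (-r) = ∫⁻ x, f x + ENNReal.ofReal (-r) ∂μ := by
          rw [lintegral_add_right _ measurable_const, lintegral_const, measure_univ, mul_one]
      _ ≤ ∫⁻ x, g x + ENNReal.ofReal r ∂μ := lintegral_mono h
      _ = ∫⁻ x, g x ∂μ + ENNReal.ofReal r := by
          rw [lintegral_add_right _ measurable_const, lintegral_const, measure_univ, mul_one]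

section

variable {T E α : Type*} [MeasurableSpace T] [MeasurableSpace E] [MeasurableSpace α]
  {m : T → E → ℝ}

theorem measurable_mbar_kernel (hm : Measurable (Function.uncurry m))
    (κ : Kernel α T) [IsSFiniteKernel κ] :
    Measurable fun q : α × E => mbar m (κ q.1) q.2 :=
  ((hm.comp (measurable_snd.prodMk (measurable_snd.comp measurable_fst))).stronglyMeasurable
    |>.integral_kernel_prod_right' (κ := κ.comap Prod.fst measurable_fst)).measurable

theorem growthSensing_prod_le (hm : Measurable (Function.uncurry m))
    {μ ν : Measure E} [IsProbabilityMeasure μ] [SFinite ν]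
    (κ : Kernel E T) [IsSFiniteKernel κ] {c : EReal} (h : ∀ e, growth m ν (κ e) ≤ c) :
    growthSensing m (μ.prod ν) κ ≤ c := by
  have hmbar := measurable_mbar_kernel hm κ
  rw [growthSensing, lintegral_prod _ hmbar.log.ennreal_ofReal.aemeasurable,
    lintegral_prod _ (hmbar.log.neg.ennreal_ofReal.aemeasurable :
      AEMeasurable (fun q => ENNReal.ofReal (-Real.log (mbar m (κ q.1) q.2))) _)]
  exact lintegral_sub_lintegral_le h

theorem growthSensing_prod_const (hm : Measurable (Function.uncurry m))
    {μ ν : Measure E} [IsProbabilityMeasure μ] [SFinite ν]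
    (p : Measure T) [SFinite p] :
    growthSensing m (μ.prod ν) (Kernel.const E p) = growth m ν p := by
  have hmbar := measurable_mbar_kernel hm (Kernel.const E p)
  rw [growthSensing, lintegral_prod _ hmbar.log.ennreal_ofReal.aemeasurable,
    lintegral_prod _ (hmbar.log.neg.ennreal_ofReal.aemeasurable :
      AEMeasurable (fun q => ENNReal.ofReal (-Real.log (mbar m (Kernel.const E p q.1) q.2))) _)]
  simp only [Kernel.const_apply, lintegral_const, measure_univ, mul_one]
  rfl

end

theorem no_gain_from_sensing_of_independent_general
    {T E : Type*} [MeasurableSpace T] [MeasurableSpace E]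
    (ν₁ : Measure E) [IsProbabilityMeasure ν₁]
    (m : T → E → ℝ) (hm : Measurable (Function.uncurry m)) :
    gammaStarStar m (ν₁.prod ν₁) = gammaStar m ν₁ := by
  apply le_antisymm
  · refine iSup_le fun ⟨κ, _⟩ => growthSensing_prod_le hm κ fun e => ?_
    exact le_iSup (fun p : {q : Measure T // IsProbabilityMeasure q} => growth m ν₁ p)
      ⟨κ e, inferInstance⟩
  · refine iSup_le fun ⟨p, _⟩ => ?_
    rw [← growthSensing_prod_const hm (μ := ν₁) p]
    exact le_iSup (fun κ : {κ : Kernel E T // IsMarkovKernel κ} =>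
      growthSensing m (ν₁.prod ν₁) κ) ⟨Kernel.const E p, inferInstance⟩

/-- if `ν₂ = ν₁ ⊗ ν₁` is a product measure (the two consecutive environment
states are independent), then the optimal growth rates with and without sensing coincide:
`γ** = γ*`. -/
theorem no_gain_from_sensing_of_independent
    {T E : Type*} [MetricSpace T] [MeasurableSpace T] [BorelSpace T] [Nonempty T]
    [TopologicalSpace E] [PolishSpace E] [MeasurableSpace E] [BorelSpace E]
    (ν₁ : Measure E) [IsProbabilityMeasure ν₁]
    (m : T → E → ℝ) (hm : Measurable (Function.uncurry m))
    (hnonneg : ∀ t e, 0 ≤ m t e)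
    (M : ℝ) (hM : 0 < M) (hC1 : ∀ t e, m t e ≤ M)
    (hC2 : ∀ e, Continuous fun t => m t e)
    (hC3 : ∀ e, ∀ ε > (0 : ℝ), ∃ K : Set T, IsCompact K ∧ ∀ t ∉ K, m t e ≤ ε) :
    gammaStarStar m (ν₁.prod ν₁) = gammaStar m ν₁ :=
  no_gain_from_sensing_of_independent_general ν₁ m hm
end

section
/- In the two-trait/two-environment no-sensing model, suppose neither pure-optimality condition holds, i.e. ν₁(e₁)m_{t₁,e₁}/m_{t₂,e₁} + ν₁(e₂)m_{t₁,e₂}/m_{t₂,e₂} > 1 and ν₁(e₁)m_{t₂,e₁}/m_{t₁,e₁} + ν₁(e₂)m_{t₂,e₂}/m_{t₁,e₂} > 1. Then the optimal strategy is p* = a δ_{t₁} + b δ_{t₂} with a = ν₁(e₁)m_{t₂,e₂}/(m_{t₂,e₂}−m_{t₁,e₂}) + ν₁(e₂)m_{t₂,e₁}/(m_{t₂,e₁}−m_{t₁,e₁}) and b = ν₁(e₁)m_{t₁,e₂}/(m_{t₁,e₂}−m_{t₂,e₂}) + ν₁(e₂)m_{t₁,e₁}/(m_{t₁,e₁}−m_{t₂,e₁}),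 and the optimal growth rate is γ* = log|m_{t₁,e₁}m_{t₂,e₂} − m_{t₁,e₂}m_{t₂,e₁}| − ν₁(e₁)log|m_{t₂,e₂}−m_{t₁,e₂}| − ν₁(e₂)log|m_{t₂,e₁}−m_{t₁,e₁}| + ν₁(e₁)log ν₁(e₁) + ν₁(e₂)log ν₁(e₂). -/
/-!
Write `x p`, `y p` for the mean offspring numbers in the two environments and
`D = m11 m22 - m12 m21`. The combination `(m22 - m12) x p + (m11 - m21) y p = D` does not depend
on `p`, and at the candidate `a` one has `x a = w1 D / (m22 - m12)`, `y a = w2 D / (m11 - m21)`.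
Hence `w1 (x p / x a) + w2 (y p / y a) = 1` for every `p`, and `log t ≤ t - 1` (strict for
`t ≠ 1`) gives `γ p < γ a` whenever `p ≠ a`.

The two non-optimality conditions say that the numerators of `a` and `b` over
`(m11 - m21)(m22 - m12)` are positive; suitable positive combinations of them are
`w1 (m11 - m21) D` and `w2 (m22 - m12) D`, so `x a, y a > 0` and `a, b ≥ 0`.
-/

open Real Set

theorem mul_log_sub_log_le {w x x₀ : ℝ} (hw : 0 ≤ w) (hx : 0 < x) (hx₀ : 0 < x₀) :
    w * (log x - log x₀) ≤ w * (x / x₀ - 1) := by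
  rw [← log_div hx.ne' hx₀.ne']
  exact mul_le_mul_of_nonneg_left (log_le_sub_one_of_pos (div_pos hx hx₀)) hw

theorem mul_log_sub_log_lt {w x x₀ : ℝ} (hw : 0 < w) (hx : 0 < x) (hx₀ : 0 < x₀) (hne : x ≠ x₀) :
    w * (log x - log x₀) < w * (x / x₀ - 1) := by
  rw [← log_div hx.ne' hx₀.ne']
  refine mul_lt_mul_of_pos_left (log_lt_sub_one_of_pos (div_pos hx hx₀) ?_) hw
  rwa [Ne, div_eq_one_iff_eq hx₀.ne']

theorem mul_log_add_mul_log_lt {w₁ w₂ x y x₀ y₀ : ℝ} (hw₁ : 0 < w₁) (hw₂ : 0 ≤ w₂)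
    (hx : 0 < x) (hy : 0 < y) (hx₀ : 0 < x₀) (hy₀ : 0 < y₀) (hne : x ≠ x₀)
    (h : w₁ * (x / x₀) + w₂ * (y / y₀) = w₁ + w₂) :
    w₁ * log x + w₂ * log y < w₁ * log x₀ + w₂ * log y₀ := by
  linarith [mul_log_sub_log_lt hw₁ hx hx₀ hne, mul_log_sub_log_le hw₂ hy hy₀]

/- A strategy is encoded by `p = p({t₁}) ∈ [0,1]`; `meanOffspring p mA mB` is `m_{p,e}` for
`mA = m_{t₁,e}`, `mB = m_{t₂,e}`, and in `growthRate` `w1 = ν₁(e₁)`, `w2 = ν₁(e₂)`, `mij = m_{tᵢ,eⱼ}`. -/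
def meanOffspring (p mA mB : ℝ) : ℝ := p * mA + (1 - p) * mB

noncomputable def growthRate (w1 w2 m11 m21 m12 m22 p : ℝ) : ℝ :=
  w1 * log (meanOffspring p m11 m21) + w2 * log (meanOffspring p m12 m22)

noncomputable def optimalStrategy (w1 w2 m11 m21 m12 m22 : ℝ) : ℝ :=
  w1 * m22 / (m22 - m12) + w2 * m21 / (m21 - m11)

section

variable {w1 w2 m11 m21 m12 m22 : ℝ}

theorem meanOffspring_pos {p mA mB : ℝ} (hp : p ∈ Icc (0 : ℝ) 1) (hA : 0 < mA) (hB : 0 < mB) :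
    0 < meanOffspring p mA mB := by
  obtain ⟨hp0, hp1⟩ := hp
  unfold meanOffspring
  nlinarith [mul_nonneg hp0 hA.le, mul_nonneg (sub_nonneg.2 hp1) hB.le, mul_pos hA hB]

theorem sub_mul_meanOffspring_add_sub_mul_meanOffspring (m11 m21 m12 m22 p : ℝ) :
    (m22 - m12) * meanOffspring p m11 m21 + (m11 - m21) * meanOffspring p m12 m22 =
      m11 * m22 - m12 * m21 := by
  unfold meanOffspring; ring

theorem meanOffspring_optimalStrategy_left (hw : w1 + w2 = 1)
    (hδ₁ : m11 - m21 ≠ 0) (hδ₂ : m22 - m12 ≠ 0) :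
    meanOffspring (optimalStrategy w1 w2 m11 m21 m12 m22) m11 m21 =
      w1 * (m11 * m22 - m12 * m21) / (m22 - m12) := by
  have hδ₁' : m21 - m11 ≠ 0 := by rwa [← neg_sub, neg_ne_zero]
  obtain rfl : w2 = 1 - w1 := by linarith
  unfold meanOffspring optimalStrategy
  field_simp
  ring

theorem meanOffspring_optimalStrategy_right (hw : w1 + w2 = 1)
    (hδ₁ : m11 - m21 ≠ 0) (hδ₂ : m22 - m12 ≠ 0) :
    meanOffspring (optimalStrategy w1 w2 m11 m21 m12 m22) m12 m22 =
      w2 * (m11 * m22 - m12 * m21) / (m11 - m21) := by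
  have hδ₁' : m21 - m11 ≠ 0 := by rwa [← neg_sub, neg_ne_zero]
  obtain rfl : w2 = 1 - w1 := by linarith
  unfold meanOffspring optimalStrategy
  field_simp
  ring

theorem mul_sub_lt_mul_sub_of_one_lt (hw : w1 + w2 = 1) (hm21 : 0 < m21) (hm22 : 0 < m22)
    (h : 1 < w1 * m11 / m21 + w2 * m12 / m22) :
    w2 * m21 * (m22 - m12) < w1 * m22 * (m11 - m21) := by
  rw [div_add_div _ _ hm21.ne' hm22.ne', one_lt_div (mul_pos hm21 hm22)] at h
  linear_combination h + (m21 * m22) * hw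

theorem sub_mul_det_pos (hw1 : 0 < w1) (hw2 : 0 < w2)
    (hm11 : 0 < m11) (hm21 : 0 < m21) (hm12 : 0 < m12) (hm22 : 0 < m22)
    (h₁ : w2 * m21 * (m22 - m12) < w1 * m22 * (m11 - m21))
    (h₂ : w2 * m11 * (m12 - m22) < w1 * m12 * (m21 - m11)) :
    0 < (m11 - m21) * (m11 * m22 - m12 * m21) ∧ 0 < (m22 - m12) * (m11 * m22 - m12 * m21) := by
  have e₁ : 0 < w1 * ((m11 - m21) * (m11 * m22 - m12 * m21)) := by
    nlinarith [mul_lt_mul_of_pos_left h₁ hm11, mul_lt_mul_of_pos_left h₂ hm21]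
  have e₂ : 0 < w2 * ((m22 - m12) * (m11 * m22 - m12 * m21)) := by
    nlinarith [mul_lt_mul_of_pos_left h₁ hm12, mul_lt_mul_of_pos_left h₂ hm22]
  exact ⟨pos_of_mul_pos_right e₁ hw1.le, pos_of_mul_pos_right e₂ hw2.le⟩

theorem optimalStrategy_pos (h : w2 * m21 * (m22 - m12) < w1 * m22 * (m11 - m21))
    (hδ : 0 < (m11 - m21) * (m22 - m12)) :
    0 < optimalStrategy w1 w2 m11 m21 m12 m22 := by
  have hδ₁ : m11 - m21 ≠ 0 := left_ne_zero_of_mul hδ.ne'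
  have hδ₂ : m22 - m12 ≠ 0 := right_ne_zero_of_mul hδ.ne'
  have hδ₁' : m21 - m11 ≠ 0 := by rwa [← neg_sub, neg_ne_zero]
  have : optimalStrategy w1 w2 m11 m21 m12 m22 =
      (w1 * m22 * (m11 - m21) - w2 * m21 * (m22 - m12)) / ((m11 - m21) * (m22 - m12)) := by
    unfold optimalStrategy
    field_simp
    ring
  rw [this]
  exact div_pos (sub_pos.2 h) hδ

theorem optimalStrategy_add_optimalStrategy_swap (hw : w1 + w2 = 1)
    (hδ₁ : m11 - m21 ≠ 0) (hδ₂ : m22 - m12 ≠ 0) :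
    optimalStrategy w1 w2 m11 m21 m12 m22 + optimalStrategy w1 w2 m21 m11 m22 m12 = 1 := by
  have hδ₁' : m21 - m11 ≠ 0 := by rwa [← neg_sub, neg_ne_zero]
  have hδ₂' : m12 - m22 ≠ 0 := by rwa [← neg_sub, neg_ne_zero]
  obtain rfl : w2 = 1 - w1 := by linarith
  unfold optimalStrategy
  field_simp
  ring

theorem div_pos_of_mul_pos {a b : ℝ} (h : 0 < b * a) : 0 < a / b :=
  div_pos_iff.2 ((mul_pos_iff.1 h).imp And.symm And.symm)

theorem growthRate_lt_growthRate_optimalStrategy (hw1 : 0 < w1) (hw2 : 0 < w2) (hw : w1 + w2 = 1)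
    (hm11 : 0 < m11) (hm21 : 0 < m21) (hm12 : 0 < m12) (hm22 : 0 < m22)
    (hδ₁ : 0 < (m11 - m21) * (m11 * m22 - m12 * m21))
    (hδ₂ : 0 < (m22 - m12) * (m11 * m22 - m12 * m21))
    {p : ℝ} (hp : p ∈ Icc (0 : ℝ) 1) (hpa : p ≠ optimalStrategy w1 w2 m11 m21 m12 m22) :
    growthRate w1 w2 m11 m21 m12 m22 p <
      growthRate w1 w2 m11 m21 m12 m22 (optimalStrategy w1 w2 m11 m21 m12 m22) := by
  set a := optimalStrategy w1 w2 m11 m21 m12 m22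
  have hδ₁0 := left_ne_zero_of_mul hδ₁.ne'
  have hδ₂0 := left_ne_zero_of_mul hδ₂.ne'
  have hD := right_ne_zero_of_mul hδ₁.ne'
  have hx₀ := meanOffspring_optimalStrategy_left hw hδ₁0 hδ₂0
  have hy₀ := meanOffspring_optimalStrategy_right hw hδ₁0 hδ₂0
  have hne : meanOffspring p m11 m21 ≠ meanOffspring a m11 m21 := by
    intro h
    have : (p - a) * (m11 - m21) = 0 := by unfold meanOffspring at h; linear_combination h
    exact hpa (sub_eq_zero.1 ((mul_eq_zero.1 this).resolve_right hδ₁0))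
  refine mul_log_add_mul_log_lt hw1 hw2.le (meanOffspring_pos hp hm11 hm21)
    (meanOffspring_pos hp hm12 hm22) ?_ ?_ hne ?_
  · rw [hx₀, mul_div_assoc]; exact mul_pos hw1 (div_pos_of_mul_pos hδ₂)
  · rw [hy₀, mul_div_assoc]; exact mul_pos hw2 (div_pos_of_mul_pos hδ₁)
  · rw [hx₀, hy₀, hw]
    field_simp
    linear_combination sub_mul_meanOffspring_add_sub_mul_meanOffspring m11 m21 m12 m22 p

theorem growthRate_optimalStrategy (hw1 : 0 < w1) (hw2 : 0 < w2) (hw : w1 + w2 = 1)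
    (hδ₁ : m11 - m21 ≠ 0) (hδ₂ : m22 - m12 ≠ 0) (hD : m11 * m22 - m12 * m21 ≠ 0) :
    growthRate w1 w2 m11 m21 m12 m22 (optimalStrategy w1 w2 m11 m21 m12 m22) =
      log |m11 * m22 - m12 * m21| - w1 * log |m22 - m12| - w2 * log |m21 - m11| +
        w1 * log w1 + w2 * log w2 := by
  rw [growthRate, meanOffspring_optimalStrategy_left hw hδ₁ hδ₂,
    meanOffspring_optimalStrategy_right hw hδ₁ hδ₂, log_div (mul_ne_zero hw1.ne' hD) hδ₂,
    log_div (mul_ne_zero hw2.ne' hD) hδ₁, log_mul hw1.ne' hD, log_mul hw2.ne' hD]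
  simp only [log_abs]
  rw [← neg_sub m11 m21, log_neg_eq_log]
  linear_combination log (m11 * m22 - m12 * m21) * hw

end

theorem two_trait_two_env_optimal_general
    (w1 w2 m11 m21 m12 m22 : ℝ)
    (hw1 : 0 < w1) (hw2 : 0 < w2) (hw : w1 + w2 = 1)
    (hm11 : 0 < m11) (hm21 : 0 < m21) (hm12 : 0 < m12) (hm22 : 0 < m22)
    (hcond1 : 1 < w1 * m11 / m21 + w2 * m12 / m22)
    (hcond2 : 1 < w1 * m21 / m11 + w2 * m22 / m12) :
    0 ≤ w1 * m22 / (m22 - m12) + w2 * m21 / (m21 - m11) ∧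
    0 ≤ w1 * m12 / (m12 - m22) + w2 * m11 / (m11 - m21) ∧
    (w1 * m22 / (m22 - m12) + w2 * m21 / (m21 - m11)) +
        (w1 * m12 / (m12 - m22) + w2 * m11 / (m11 - m21)) = 1 ∧
    (∀ p ∈ Set.Icc (0 : ℝ) 1,
      w1 * Real.log (p * m11 + (1 - p) * m21) + w2 * Real.log (p * m12 + (1 - p) * m22) ≤
        w1 * Real.log ((w1 * m22 / (m22 - m12) + w2 * m21 / (m21 - m11)) * m11 +
            (1 - (w1 * m22 / (m22 - m12) + w2 * m21 / (m21 - m11))) * m21) +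
          w2 * Real.log ((w1 * m22 / (m22 - m12) + w2 * m21 / (m21 - m11)) * m12 +
            (1 - (w1 * m22 / (m22 - m12) + w2 * m21 / (m21 - m11))) * m22)) ∧
    (∀ p ∈ Set.Icc (0 : ℝ) 1,
      w1 * Real.log (p * m11 + (1 - p) * m21) + w2 * Real.log (p * m12 + (1 - p) * m22) =
        w1 * Real.log ((w1 * m22 / (m22 - m12) + w2 * m21 / (m21 - m11)) * m11 +
            (1 - (w1 * m22 / (m22 - m12) + w2 * m21 / (m21 - m11))) * m21) +
          w2 * Real.log ((w1 * m22 / (m22 - m12) + w2 * m21 / (m21 - m11)) * m12 +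
            (1 - (w1 * m22 / (m22 - m12) + w2 * m21 / (m21 - m11))) * m22) →
        p = w1 * m22 / (m22 - m12) + w2 * m21 / (m21 - m11)) ∧
    w1 * Real.log ((w1 * m22 / (m22 - m12) + w2 * m21 / (m21 - m11)) * m11 +
          (1 - (w1 * m22 / (m22 - m12) + w2 * m21 / (m21 - m11))) * m21) +
        w2 * Real.log ((w1 * m22 / (m22 - m12) + w2 * m21 / (m21 - m11)) * m12 +
          (1 - (w1 * m22 / (m22 - m12) + w2 * m21 / (m21 - m11))) * m22) =
      Real.log |m11 * m22 - m12 * m21| - w1 * Real.log |m22 - m12| -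
        w2 * Real.log |m21 - m11| + w1 * Real.log w1 + w2 * Real.log w2 := by
  have h₁ := mul_sub_lt_mul_sub_of_one_lt hw hm21 hm22 hcond1
  have h₂ := mul_sub_lt_mul_sub_of_one_lt hw hm11 hm12 hcond2
  obtain ⟨hδ₁, hδ₂⟩ := sub_mul_det_pos hw1 hw2 hm11 hm21 hm12 hm22 h₁ h₂
  have hδ : 0 < (m11 - m21) * (m22 - m12) := by nlinarith [mul_pos hδ₁ hδ₂]
  have hδ₁0 := left_ne_zero_of_mul hδ₁.ne'
  have hδ₂0 := left_ne_zero_of_mul hδ₂.ne'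
  have hlt : ∀ p ∈ Icc (0 : ℝ) 1, p ≠ optimalStrategy w1 w2 m11 m21 m12 m22 →
      growthRate w1 w2 m11 m21 m12 m22 p <
        growthRate w1 w2 m11 m21 m12 m22 (optimalStrategy w1 w2 m11 m21 m12 m22) :=
    fun p hp hpa => growthRate_lt_growthRate_optimalStrategy hw1 hw2 hw hm11 hm21 hm12 hm22
      hδ₁ hδ₂ hp hpa
  refine ⟨(optimalStrategy_pos h₁ hδ).le,
    (optimalStrategy_pos h₂ (by linarith)).le,
    optimalStrategy_add_optimalStrategy_swap hw hδ₁0 hδ₂0, fun p hp => ?_, fun p hp heq => ?_,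
    growthRate_optimalStrategy hw1 hw2 hw hδ₁0 hδ₂0 (right_ne_zero_of_mul hδ₁.ne')⟩
  · rcases eq_or_ne p (optimalStrategy w1 w2 m11 m21 m12 m22) with rfl | hpa
    · exact le_rfl
    · exact (hlt p hp hpa).le
  · by_contra hpa
    exact (hlt p hp hpa).ne heq

/-- the two-trait/two-environment no-sensing model. Here `w1 = ν₁(e₁)`,
`w2 = ν₁(e₂)`, `m11 = m_{t₁,e₁}`, `m21 = m_{t₂,e₁}`, `m12 = m_{t₁,e₂}`, `m22 = m_{t₂,e₂}`,
and a strategy `p = p({t₁}) ∈ [0,1]` has growth rate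
`f p = w1 log(p m11 + (1−p) m21) + w2 log(p m12 + (1−p) m22)`.
If neither pure-optimality condition holds, i.e.
`w1 m11/m21 + w2 m12/m22 > 1` and `w1 m21/m11 + w2 m22/m12 > 1`, then the optimal
strategy is `p* = a δ_{t₁} + b δ_{t₂}` with
`a = w1 m22/(m22−m12) + w2 m21/(m21−m11)` and `b = w1 m12/(m12−m22) + w2 m11/(m11−m21)`
(in particular `a, b ≥ 0`, `a + b = 1` and `a` is the unique maximizer of `f` over `[0,1]`),
and the optimal growth rate is
`γ* = log|m11 m22 − m12 m21| − w1 log|m22−m12| − w2 log|m21−m11| + w1 log w1 + w2 log w2`. -/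
theorem two_trait_two_env_optimal
    (w1 w2 m11 m21 m12 m22 : ℝ)
    (hw1 : 0 < w1) (hw2 : 0 < w2) (hw : w1 + w2 = 1)
    (hm11 : 0 < m11) (hm21 : 0 < m21) (hm12 : 0 < m12) (hm22 : 0 < m22)
    (hne1 : m11 ≠ m21) (hne2 : m12 ≠ m22)
    (hcond1 : 1 < w1 * m11 / m21 + w2 * m12 / m22)
    (hcond2 : 1 < w1 * m21 / m11 + w2 * m22 / m12) :
    0 ≤ w1 * m22 / (m22 - m12) + w2 * m21 / (m21 - m11) ∧
    0 ≤ w1 * m12 / (m12 - m22) + w2 * m11 / (m11 - m21) ∧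
    (w1 * m22 / (m22 - m12) + w2 * m21 / (m21 - m11)) +
        (w1 * m12 / (m12 - m22) + w2 * m11 / (m11 - m21)) = 1 ∧
    (∀ p ∈ Set.Icc (0 : ℝ) 1,
      w1 * Real.log (p * m11 + (1 - p) * m21) + w2 * Real.log (p * m12 + (1 - p) * m22) ≤
        w1 * Real.log ((w1 * m22 / (m22 - m12) + w2 * m21 / (m21 - m11)) * m11 +
            (1 - (w1 * m22 / (m22 - m12) + w2 * m21 / (m21 - m11))) * m21) +
          w2 * Real.log ((w1 * m22 / (m22 - m12) + w2 * m21 / (m21 - m11)) * m12 +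
            (1 - (w1 * m22 / (m22 - m12) + w2 * m21 / (m21 - m11))) * m22)) ∧
    (∀ p ∈ Set.Icc (0 : ℝ) 1,
      w1 * Real.log (p * m11 + (1 - p) * m21) + w2 * Real.log (p * m12 + (1 - p) * m22) =
        w1 * Real.log ((w1 * m22 / (m22 - m12) + w2 * m21 / (m21 - m11)) * m11 +
            (1 - (w1 * m22 / (m22 - m12) + w2 * m21 / (m21 - m11))) * m21) +
          w2 * Real.log ((w1 * m22 / (m22 - m12) + w2 * m21 / (m21 - m11)) * m12 +
            (1 - (w1 * m22 / (m22 - m12) + w2 * m21 / (m21 - m11))) * m22) →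
        p = w1 * m22 / (m22 - m12) + w2 * m21 / (m21 - m11)) ∧
    w1 * Real.log ((w1 * m22 / (m22 - m12) + w2 * m21 / (m21 - m11)) * m11 +
          (1 - (w1 * m22 / (m22 - m12) + w2 * m21 / (m21 - m11))) * m21) +
        w2 * Real.log ((w1 * m22 / (m22 - m12) + w2 * m21 / (m21 - m11)) * m12 +
          (1 - (w1 * m22 / (m22 - m12) + w2 * m21 / (m21 - m11))) * m22) =
      Real.log |m11 * m22 - m12 * m21| - w1 * Real.log |m22 - m12| -
        w2 * Real.log |m21 - m11| + w1 * Real.log w1 + w2 * Real.log w2 :=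
  two_trait_two_env_optimal_general w1 w2 m11 m21 m12 m22 hw1 hw2 hw hm11 hm21 hm12 hm22 hcond1
    hcond2
end
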